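/- For fixed a, Q, Γ, V, w, τ, N₀, W > 0, the function h(p) = -Q·a·W·τ·log₂(1 + Γ·p/(a·N₀·W)) + V·w·p is convex on [0, ∞), its unique stationary point is p* = a·W·(Qτ/(Vw·ln2) - N₀/Γ), and the minimizer over [0, p_max] equals min{max{a·W·(Qτ/(Vw·ln2) - N₀/Γ), 0}, p_max}. -/

import Mathlib

/-!
With `A = QaWτ`, `B = Γ/(aN₀W)` and `C = Vw` the cost is `-A log₂(1 + Bp) + Cp`. Its derivative
`C - AB/(ln 2 · (1 + Bp)) = CB (p - p*)/(1 + Bp)`, with `p* = A/(C ln 2) - 1/B`, is increasing on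
`[0, ∞)` and has the sign of `p - p*`. So the cost is convex, `p*` is its only stationary point, and on
`[0, p_max]` it decreases up to the projection of `p*` onto that interval and increases after it.
-/

open Real Set

theorem isMinOn_Icc_min_max_of_deriv {f : ℝ → ℝ} {lo hi c : ℝ} (hle : lo ≤ hi)
    (hf : ContinuousOn f (Icc lo hi)) (hf' : DifferentiableOn ℝ f (Ioo lo hi))
    (hneg : ∀ x ∈ Ioo lo hi, x < c → deriv f x ≤ 0)
    (hpos : ∀ x ∈ Ioo lo hi, c < x → 0 ≤ deriv f x) :
    IsMinOn f (Icc lo hi) (min (max c lo) hi) := by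
  set q := min (max c lo) hi
  have hq : q ∈ Icc lo hi := ⟨le_min (le_max_right c lo) hle, min_le_right _ _⟩
  have hanti : AntitoneOn f (Icc lo q) := by
    refine antitoneOn_of_deriv_nonpos (convex_Icc lo q) (hf.mono (Icc_subset_Icc_right hq.2))
      ?_ ?_ <;> rw [interior_Icc]
    · exact hf'.mono (Ioo_subset_Ioo_right hq.2)
    · intro x ⟨hlo, hxq⟩
      have hxc : x < max c lo := hxq.trans_le (min_le_left _ _)
      exact hneg x ⟨hlo, hxq.trans_le hq.2⟩ ((lt_max_iff.mp hxc).resolve_right hlo.not_gt)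
  have hmono : MonotoneOn f (Icc q hi) := by
    refine monotoneOn_of_deriv_nonneg (convex_Icc q hi) (hf.mono (Icc_subset_Icc_left hq.1))
      ?_ ?_ <;> rw [interior_Icc]
    · exact hf'.mono (Ioo_subset_Ioo_left hq.1)
    · intro x ⟨hqx, hhi⟩
      have hcx : max c lo < x := (min_lt_iff.mp hqx).resolve_right hhi.not_gt
      exact hpos x ⟨hq.1.trans_lt hqx, hhi⟩ (max_lt_iff.mp hcx).1
  intro x hx
  rcases le_total x q with hxq | hqx
  · exact hanti ⟨hx.1, hxq⟩ ⟨hq.1, le_rfl⟩ hxq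
  · exact hmono ⟨le_rfl, hq.2⟩ ⟨hqx, hx.2⟩ hqx

noncomputable def rateCost (A B C p : ℝ) : ℝ := -(A * logb 2 (1 + B * p)) + C * p

noncomputable def rateCostCritical (A B C : ℝ) : ℝ := A / (C * log 2) - 1 / B

theorem hasDerivAt_rateCost (A B C : ℝ) {p : ℝ} (hp : 0 < 1 + B * p) :
    HasDerivAt (rateCost A B C) (C - A * B / (log 2 * (1 + B * p))) p := by
  have hlin : HasDerivAt (fun q => 1 + B * q) B p := by
    simpa using ((hasDerivAt_id p).const_mul B).const_add 1
  have hlog := ((hlin.log hp.ne').div_const (log 2)).const_mul A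
  have hf : rateCost A B C = fun q => -(A * (log (1 + B * q) / log 2)) + C * q := by
    funext q; rw [rateCost, logb]
  rw [hf]
  refine (hlog.fun_neg.fun_add ((hasDerivAt_id' p).const_mul C)).congr_deriv ?_
  field_simp
  ring

variable {A B C : ℝ}

theorem convexOn_rateCost (hA : 0 ≤ A) (hB : 0 ≤ B) : ConvexOn ℝ (Ici 0) (rateCost A B C) := by
  have hderiv : ∀ p : ℝ, 0 ≤ p → HasDerivAt (rateCost A B C) _ p := fun p hp =>
    hasDerivAt_rateCost A B C (by positivity : 0 < 1 + B * p)
  refine MonotoneOn.convexOn_of_deriv (convex_Ici 0)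
    (fun p hp => (hderiv p hp).continuousAt.continuousWithinAt) ?_ ?_ <;> rw [interior_Ici]
  · exact fun p hp => (hderiv p hp.le).differentiableAt.differentiableWithinAt
  · intro x hx y hy hxy
    rw [(hderiv x hx.le).deriv, (hderiv y hy.le).deriv]
    have : 0 < 1 + B * x := by have : 0 < x := hx; positivity
    gcongr

theorem deriv_rateCost (hB : 0 < B) (hC : 0 < C) {p : ℝ} (hp : 0 ≤ p) :
    deriv (rateCost A B C) p = C * B * (p - rateCostCritical A B C) / (1 + B * p) := by
  have hp' : 0 < 1 + B * p := by positivity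
  rw [(hasDerivAt_rateCost A B C hp').deriv, rateCostCritical]
  field_simp
  ring

theorem deriv_rateCost_eq_zero_iff (hB : 0 < B) (hC : 0 < C) {p : ℝ} (hp : 0 ≤ p) :
    deriv (rateCost A B C) p = 0 ↔ p = rateCostCritical A B C := by
  have hp' : 0 < 1 + B * p := by positivity
  rw [deriv_rateCost hB hC hp, div_eq_zero_iff, mul_eq_zero, sub_eq_zero]
  simp only [(mul_pos hC hB).ne', hp'.ne', false_or, or_false]

theorem isMinOn_rateCost (hB : 0 < B) (hC : 0 < C) {pmax : ℝ} (hpmax : 0 ≤ pmax) :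
    IsMinOn (rateCost A B C) (Icc 0 pmax) (min (max (rateCostCritical A B C) 0) pmax) := by
  have hderiv : ∀ p, 0 ≤ p → HasDerivAt (rateCost A B C) _ p := fun p hp =>
    hasDerivAt_rateCost A B C (by positivity : 0 < 1 + B * p)
  refine isMinOn_Icc_min_max_of_deriv hpmax
    (fun p hp => (hderiv p hp.1).continuousAt.continuousWithinAt)
    (fun p hp => (hderiv p hp.1.le).differentiableAt.differentiableWithinAt) ?_ ?_
  · intro p ⟨hp, _⟩ hlt
    rw [deriv_rateCost hB hC hp.le]
    exact div_nonpos_of_nonpos_of_nonneg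
      (mul_nonpos_of_nonneg_of_nonpos (by positivity) (sub_nonpos.mpr hlt.le)) (by positivity)
  · intro p ⟨hp, _⟩ hlt
    rw [deriv_rateCost hB hC hp.le]
    exact div_nonneg (mul_nonneg (by positivity) (sub_nonneg.mpr hlt.le)) (by positivity)

theorem power_subproblem_optimal_general (Q a Γ V w τ N₀ W pmax : ℝ)
    (hQ : 0 < Q) (ha : 0 < a) (hΓ : 0 < Γ) (hV : 0 < V) (hw : 0 < w)
    (hτ : 0 < τ) (hN : 0 < N₀) (hW : 0 < W) (hpmax : 0 < pmax) :
    ConvexOn ℝ (Set.Ici (0 : ℝ))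
        (fun p : ℝ => -(Q * a * W * τ * Real.logb 2 (1 + Γ * p / (a * N₀ * W))) + V * w * p) ∧
      (∀ p ∈ Set.Ici (0 : ℝ),
        (deriv (fun p : ℝ =>
            -(Q * a * W * τ * Real.logb 2 (1 + Γ * p / (a * N₀ * W))) + V * w * p) p = 0 ↔
          p = a * W * (Q * τ / (V * w * Real.log 2) - N₀ / Γ))) ∧
      IsMinOn (fun p : ℝ =>
          -(Q * a * W * τ * Real.logb 2 (1 + Γ * p / (a * N₀ * W))) + V * w * p)
        (Set.Icc 0 pmax)
        (min (max (a * W * (Q * τ / (V * w * Real.log 2) - N₀ / Γ)) 0) pmax) := by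
  have hcost : (fun p : ℝ => -(Q * a * W * τ * logb 2 (1 + Γ * p / (a * N₀ * W))) + V * w * p)
      = rateCost (Q * a * W * τ) (Γ / (a * N₀ * W)) (V * w) := by
    funext p
    rw [rateCost, mul_div_right_comm]
  have hcrit : a * W * (Q * τ / (V * w * log 2) - N₀ / Γ)
      = rateCostCritical (Q * a * W * τ) (Γ / (a * N₀ * W)) (V * w) := by
    rw [rateCostCritical, one_div_div]
    ring
  have hB : 0 < Γ / (a * N₀ * W) := by positivity
  have hC : 0 < V * w := by positivity
  rw [hcost, hcrit]
  exact ⟨convexOn_rateCost (by positivity) hB.le,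
    fun p hp => deriv_rateCost_eq_zero_iff hB hC hp, isMinOn_rateCost hB hC hpmax.le⟩

theorem power_subproblem_optimal (Q a Γ V w τ N₀ W pmax : ℝ)
    (hQ : 0 < Q) (ha : 0 < a) (ha1 : a ≤ 1) (hΓ : 0 < Γ) (hV : 0 < V) (hw : 0 < w)
    (hτ : 0 < τ) (hN : 0 < N₀) (hW : 0 < W) (hpmax : 0 < pmax) :
    ConvexOn ℝ (Set.Ici (0 : ℝ))
        (fun p : ℝ => -(Q * a * W * τ * Real.logb 2 (1 + Γ * p / (a * N₀ * W))) + V * w * p) ∧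
      (∀ p ∈ Set.Ici (0 : ℝ),
        (deriv (fun p : ℝ =>
            -(Q * a * W * τ * Real.logb 2 (1 + Γ * p / (a * N₀ * W))) + V * w * p) p = 0 ↔
          p = a * W * (Q * τ / (V * w * Real.log 2) - N₀ / Γ))) ∧
      IsMinOn (fun p : ℝ =>
          -(Q * a * W * τ * Real.logb 2 (1 + Γ * p / (a * N₀ * W))) + V * w * p)
        (Set.Icc 0 pmax)
        (min (max (a * W * (Q * τ / (V * w * Real.log 2) - N₀ / Γ)) 0) pmax) :=
  power_subproblem_optimal_general Q a Γ V w τ N₀ W pmax hQ ha hΓ hV hw hτ hN hW hpmax
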